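/- Let w = (wₙ)ₙ be a sequence of positive reals with wₙ → 0, and let B_w be the unilateral weighted backward shift on ℓ_∞. If f ∈ ℓ_∞ \ c_∞, then B_w restricted to span{f} ⊕ c_∞ maps into c₀, and B_w : span{f} ⊕ c_∞ → span{f} ⊕ c_∞ is not cyclic. -/

import Mathlib

open Filter Topology

/-- The subspace `c_∞` of `ℓ_∞ = ℓ_∞(ℕ)` of convergent sequences. -/
noncomputable def cInfN : Submodule ℂ (BoundedContinuousFunction ℕ ℂ) where
  carrier := {f | ∃ L : ℂ, Tendsto (fun n : ℕ => f n) atTop (nhds L)}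
  zero_mem' := ⟨0, tendsto_const_nhds⟩
  add_mem' := by
    rintro f g ⟨L, hL⟩ ⟨M, hM⟩
    exact ⟨L + M, by simpa using hL.add hM⟩
  smul_mem' := by
    rintro c f ⟨L, hL⟩
    exact ⟨c • L, by simpa [smul_eq_mul] using hL.const_mul c⟩

/-- The subspace `c₀` of `ℓ_∞(ℕ)` of null sequences. -/
noncomputable def cZeroN : Submodule ℂ (BoundedContinuousFunction ℕ ℂ) where
  carrier := {f | Tendsto (fun n : ℕ => f n) atTop (nhds 0)}
  zero_mem' := tendsto_const_nhds
  add_mem' := by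
    intro f g hf hg
    simpa using hf.add hg
  smul_mem' := by
    intro c f hf
    simpa [smul_eq_mul] using hf.const_mul c

open Set Submodule
open scoped BoundedContinuousFunction

/-! If `T` maps a topological vector space into a closed subspace `C`, then the orbit of any `g`
spans a subspace of `C ⊔ 𝕜 ∙ g`, which is closed; so a cyclic vector forces `C` to have
codimension at most one. Since `wₙ → 0`, the weighted backward shift lands in `C = c₀`, while
`f` and the constant sequence `1` are independent modulo `c₀` because `f ∉ c_∞`. -/

theorem BoundedContinuousFunction.isClosed_setOf_tendsto {α β : Type*} [TopologicalSpace α]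
    [PseudoMetricSpace β] (l : Filter α) (b : β) :
    IsClosed {f : α →ᵇ β | Tendsto f l (𝓝 b)} := by
  refine isClosed_of_closure_subset fun f hf => Metric.tendsto_nhds.2 fun ε hε => ?_
  obtain ⟨g, hg, hfg⟩ := Metric.mem_closure_iff.1 hf (ε / 2) (half_pos hε)
  filter_upwards [Metric.tendsto_nhds.1 hg (ε / 2) (half_pos hε)] with x hx
  calc dist (f x) b ≤ dist (f x) (g x) + dist (g x) b := dist_triangle _ _ _
    _ < ε / 2 + ε / 2 := add_lt_add_of_le_of_lt ((f.dist_coe_le_dist x).trans hfg.le) hx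
    _ = ε := add_halves ε

theorem isClosed_cZeroN : IsClosed (cZeroN : Set (ℕ →ᵇ ℂ)) :=
  BoundedContinuousFunction.isClosed_setOf_tendsto atTop 0

theorem cZeroN_le_cInfN : cZeroN ≤ cInfN := fun _ hx => ⟨0, hx⟩

theorem one_mem_cInfN : (1 : ℕ →ᵇ ℂ) ∈ cInfN := ⟨1, tendsto_const_nhds⟩

theorem one_notMem_cZeroN : (1 : ℕ →ᵇ ℂ) ∉ cZeroN := fun h =>
  one_ne_zero (tendsto_nhds_unique tendsto_const_nhds (h : Tendsto (fun _ : ℕ => (1 : ℂ)) _ _))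

theorem weightedShift_mem_cZeroN {w : ℕ → ℝ} (hw : Tendsto w atTop (𝓝 0))
    {B : (ℕ →ᵇ ℂ) → ℕ →ᵇ ℂ} (hB : ∀ x n, B x n = (w (n + 1) : ℂ) * x (n + 1)) (x : ℕ →ᵇ ℂ) :
    B x ∈ cZeroN := by
  change Tendsto (fun n => B x n) atTop (𝓝 0)
  simp_rw [hB]
  refine Tendsto.zero_mul_isBoundedUnder_le ?_ ⟨‖x‖, eventually_map.2 (.of_forall fun n => ?_)⟩
  · exact (Complex.continuous_ofReal.tendsto' 0 0 Complex.ofReal_zero).comp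
      (hw.comp (tendsto_add_atTop_nat 1))
  · exact x.norm_coe_le_norm (n + 1)

theorem span_orbit_le_sup_span_singleton {R M : Type*} [Semiring R] [AddCommMonoid M]
    [Module R M] {T : M →ₗ[R] M} {C : Submodule R M} (hT : ∀ x, T x ∈ C) (g : M) :
    span R (range fun n : ℕ => (T ^ n) g) ≤ C ⊔ R ∙ g := by
  rw [span_le]
  rintro - ⟨_ | n, rfl⟩
  · exact mem_sup_right (mem_span_singleton_self g)
  · refine mem_sup_left (show (T ^ (n + 1)) g ∈ C from ?_)
    rw [pow_succ', Module.End.mul_apply]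
    exact hT _

theorem sup_span_singleton_eq_top_of_notMem {K V : Type*} [DivisionRing K] [AddCommGroup V]
    [Module K V] {C : Submodule K V} {g v : V} (hg : C ⊔ K ∙ g = ⊤) (hv : v ∉ C) :
    C ⊔ K ∙ v = ⊤ := by
  have hsup (y : V) : span K (insert y (C : Set V)) = C ⊔ K ∙ y := by
    rw [span_insert, span_eq, sup_comm]
  -- Steinitz exchange: `v ∈ span (insert g C) \ C` puts `g` in `span (insert v C)`.
  have hgv : g ∈ C ⊔ K ∙ v := by
    rw [← hsup]
    exact mem_span_insert_exchange (by rw [hsup, hg]; trivial) (by rwa [span_eq])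
  exact eq_top_iff.2 (hg ▸ sup_le le_sup_left ((span_singleton_le_iff_mem g _).2 hgv))

section Codimension

variable {𝕜 E : Type*} [NontriviallyNormedField 𝕜] [CompleteSpace 𝕜] [AddCommGroup E]
  [TopologicalSpace E] [IsTopologicalAddGroup E] [Module 𝕜 E] [ContinuousSMul 𝕜 E]

theorem sup_span_singleton_eq_top_of_dense_span_orbit {T : E →ₗ[𝕜] E} {C : Submodule 𝕜 E}
    (hC : IsClosed (C : Set E)) (hT : ∀ x, T x ∈ C) {g : E}
    (hg : Dense (span 𝕜 (range fun n : ℕ => (T ^ n) g) : Set E)) :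
    C ⊔ 𝕜 ∙ g = ⊤ := by
  refine eq_top_iff'.2 fun x => ?_
  have hclosed := isClosed_sup_finiteDimensional C (𝕜 ∙ g) hC
  exact closure_minimal (span_orbit_le_sup_span_singleton hT g) hclosed
    (hg.closure_eq ▸ mem_univ x)

theorem not_dense_span_orbit {T : E →ₗ[𝕜] E} {C : Submodule 𝕜 E}
    (hC : IsClosed (C : Set E)) (hT : ∀ x, T x ∈ C) {u v : E} (hv : v ∉ C)
    (hu : u ∉ C ⊔ 𝕜 ∙ v) (g : E) :
    ¬ Dense (span 𝕜 (range fun n : ℕ => (T ^ n) g) : Set E) := fun hg =>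
  hu ((sup_span_singleton_eq_top_of_notMem
    (sup_span_singleton_eq_top_of_dense_span_orbit hC hT hg) hv).symm ▸ mem_top)

end Codimension

theorem weighted_backward_shift_on_span_oplus_cInf_not_cyclic_general
    (w : ℕ → ℝ) (hw0 : Tendsto w atTop (nhds 0))
    (Bw : BoundedContinuousFunction ℕ ℂ →ₗ[ℂ] BoundedContinuousFunction ℕ ℂ)
    (hBw : ∀ (x : BoundedContinuousFunction ℕ ℂ) (n : ℕ),
      (Bw x) n = (w (n + 1) : ℂ) * x (n + 1))
    (f : BoundedContinuousFunction ℕ ℂ) (hf : f ∉ cInfN) :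
    (∀ g ∈ (Submodule.span ℂ {f} ⊔ cInfN), Bw g ∈ cZeroN) ∧
    (∀ S : ↥(Submodule.span ℂ {f} ⊔ cInfN) →ₗ[ℂ] ↥(Submodule.span ℂ {f} ⊔ cInfN),
      (∀ x : ↥(Submodule.span ℂ {f} ⊔ cInfN),
        ((S x : BoundedContinuousFunction ℕ ℂ)) = Bw (x : BoundedContinuousFunction ℕ ℂ)) →
      ¬ ∃ g : ↥(Submodule.span ℂ {f} ⊔ cInfN),
        Dense (↑(Submodule.span ℂ (Set.range fun n : ℕ => (S ^ n) g)) :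
          Set ↥(Submodule.span ℂ {f} ⊔ cInfN))) := by
  have hB := weightedShift_mem_cZeroN hw0 hBw
  set M := span ℂ {f} ⊔ cInfN
  refine ⟨fun g _ => hB g, fun S hS ⟨g, hg⟩ => ?_⟩
  let C := cZeroN.comap M.subtype
  let one : M := ⟨1, mem_sup_right one_mem_cInfN⟩
  have hC : IsClosed (C : Set M) := isClosed_cZeroN.preimage continuous_subtype_val
  have hSC (x : M) : S x ∈ C := by simpa [C, hS] using hB x
  have hCone : C ⊔ ℂ ∙ one ≤ cInfN.comap M.subtype :=
    sup_le (comap_mono cZeroN_le_cInfN) ((span_singleton_le_iff_mem _ _).2 one_mem_cInfN)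
  exact not_dense_span_orbit hC hSC one_notMem_cZeroN
    (u := ⟨f, mem_sup_left (mem_span_singleton_self f)⟩) (fun h => hf (hCone h)) g hg

/-- let `w = (wₙ)` be positive reals with `wₙ → 0` and `B_w` the unilateral
weighted backward shift `(B_w x)ₙ = w_{n+1} x_{n+1}` on `ℓ_∞`. If `f ∈ ℓ_∞ \ c_∞`, then
`B_w` maps `span{f} ⊕ c_∞` into `c₀`, and `B_w : span{f} ⊕ c_∞ → span{f} ⊕ c_∞` is not
cyclic. -/
theorem weighted_backward_shift_on_span_oplus_cInf_not_cyclic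
    (w : ℕ → ℝ) (hwpos : ∀ n, 0 < w n) (hw0 : Tendsto w atTop (nhds 0))
    (Bw : BoundedContinuousFunction ℕ ℂ →ₗ[ℂ] BoundedContinuousFunction ℕ ℂ)
    (hBw : ∀ (x : BoundedContinuousFunction ℕ ℂ) (n : ℕ),
      (Bw x) n = (w (n + 1) : ℂ) * x (n + 1))
    (f : BoundedContinuousFunction ℕ ℂ) (hf : f ∉ cInfN) :
    (∀ g ∈ (Submodule.span ℂ {f} ⊔ cInfN), Bw g ∈ cZeroN) ∧
    (∀ S : ↥(Submodule.span ℂ {f} ⊔ cInfN) →ₗ[ℂ] ↥(Submodule.span ℂ {f} ⊔ cInfN),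
      (∀ x : ↥(Submodule.span ℂ {f} ⊔ cInfN),
        ((S x : BoundedContinuousFunction ℕ ℂ)) = Bw (x : BoundedContinuousFunction ℕ ℂ)) →
      ¬ ∃ g : ↥(Submodule.span ℂ {f} ⊔ cInfN),
        Dense (↑(Submodule.span ℂ (Set.range fun n : ℕ => (S ^ n) g)) :
          Set ↥(Submodule.span ℂ {f} ⊔ cInfN))) :=
  weighted_backward_shift_on_span_oplus_cInf_not_cyclic_general w hw0 Bw hBw f hf
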